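/- arXiv:math/9512203 — 4 statements merged into one kernel-verified Lean document; each statement's English description precedes it below -/
import Mathlib

section
/- Let E be a complex Banach space and H a bounded linear operator on E such that exp(itH) is an isometry of E for all real t. Then for every unit vector x and every continuous linear functional f with ‖f‖ = 1 and f(x) = 1, the value f(Hx) is real. -/
/-!
The function `t ↦ Re f (exp (it H) x)` is bounded by `‖f‖ ‖x‖ = 1` because `exp (itH)` is an
isometry, and it equals `1` at `t = 0`. So it has a maximum at `0`, where its derivative
`Re (i f (H x)) = - Im f (H x)` must vanish.
-/

open NormedSpace

theorem hasDerivAt_apply_exp_ofReal_smul {E F : Type*} [NormedAddCommGroup E] [NormedSpace ℂ E]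
    [CompleteSpace E] [NormedAddCommGroup F] [NormedSpace ℂ F]
    (f : E →L[ℂ] F) (A : E →L[ℂ] E) (x : E) :
    HasDerivAt (fun t : ℝ => f (exp ((t : ℂ) • A) x)) (f (A x)) 0 := by
  have hexp : HasDerivAt (fun t : ℝ => exp (t • A)) (exp ((0 : ℝ) • A) * A) 0 :=
    hasDerivAt_exp_smul_const A 0
  simpa [Complex.coe_smul, Function.comp_def] using
    ((f.comp (ContinuousLinearMap.apply ℂ E x)).restrictScalars ℝ).hasFDerivAt.comp_hasDerivAt
      0 hexp

theorem HasDerivAt.re_eq_zero_of_isLocalMax_re {g : ℝ → ℂ} {g' : ℂ} {a : ℝ}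
    (hg : HasDerivAt g g' a) (hmax : IsLocalMax (fun t => (g t).re) a) : g'.re = 0 :=
  hmax.hasDerivAt_eq_zero (Complex.reCLM.hasFDerivAt.comp_hasDerivAt a hg)

theorem re_apply_le_one {E : Type*} [NormedAddCommGroup E] [NormedSpace ℂ E]
    (f : E →L[ℂ] ℂ) (hf : ‖f‖ ≤ 1) {y : E} (hy : ‖y‖ ≤ 1) : (f y).re ≤ 1 :=
  calc (f y).re ≤ ‖f y‖ := Complex.re_le_norm _
    _ ≤ ‖f‖ * ‖y‖ := f.le_opNorm y
    _ ≤ 1 := mul_le_one₀ hf (norm_nonneg y) hy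

/-- If `H` is a bounded operator on a complex Banach space such that `exp(itH)` is an
isometry for all real `t`, then for every unit vector `x` and norming functional `f`
(`‖f‖ = 1`, `f x = 1`) the value `f (H x)` is real. -/
theorem stmt1 (E : Type*) [NormedAddCommGroup E] [NormedSpace ℂ E] [CompleteSpace E]
    (H : E →L[ℂ] E)
    (hherm : ∀ t : ℝ,
      Isometry (⇑(NormedSpace.exp (((t : ℂ) * Complex.I) • H)) : E → E))
    (x : E) (hx : ‖x‖ = 1) (f : E →L[ℂ] ℂ) (hf : ‖f‖ = 1) (hfx : f x = 1) :
    (f (H x)).im = 0 := by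
  have hderiv : HasDerivAt (fun t : ℝ => f (exp ((t : ℂ) • Complex.I • H) x))
      (Complex.I * f (H x)) 0 := by
    simpa using hasDerivAt_apply_exp_ofReal_smul f (Complex.I • H) x
  have hmax : IsLocalMax (fun t : ℝ => (f (exp ((t : ℂ) • Complex.I • H) x)).re) 0 := by
    refine Filter.Eventually.of_forall fun t => ?_
    have hnorm : ‖exp ((t : ℂ) • Complex.I • H) x‖ = 1 := by
      rw [smul_smul, (hherm t).norm_map_of_map_zero (map_zero _), hx]
    simpa [hfx] using re_apply_le_one f hf.le hnorm.le
  simpa using hderiv.re_eq_zero_of_isLocalMax_re hmax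
end

section
/- On a complex Hilbert space, a bounded operator H satisfies ‖exp(itH)‖ = 1 for all real t if and only if H is self-adjoint. -/
/-!
If `H` is self-adjoint, `exp (itH)` is unitary, hence of norm one. Conversely, if
`‖exp (itH)‖ ≤ 1` for all real `t`, then `t ↦ ‖exp (itH) x‖²` attains its maximum `‖x‖²`
at `t = 0`, so its derivative `2 Re ⟪x, iHx⟫` vanishes there: `⟪Hx, x⟫` is real for every `x`,
which on a complex Hilbert space means that `H` is self-adjoint.
-/

open NormedSpace Complex

theorem IsLocalMax.real_inner_hasDerivAt_eq_zero {F : Type*} [NormedAddCommGroup F]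
    [InnerProductSpace ℝ F] {u : ℝ → F} {v : F} {t₀ : ℝ} (hmax : IsLocalMax (‖u ·‖) t₀)
    (hu : HasDerivAt u v t₀) : inner ℝ (u t₀) v = 0 := by
  have hmax_sq : IsLocalMax (‖u ·‖ ^ 2) t₀ := by
    filter_upwards [hmax] with t ht
    gcongr
  have := hmax_sq.hasDerivAt_eq_zero hu.norm_sq
  linarith

theorem IsSelfAdjoint.norm_exp_I_smul {A : Type*} [NormedRing A] [NormedAlgebra ℂ A] [StarRing A]
    [CStarRing A] [CompleteSpace A] [StarModule ℂ A] [Nontrivial A] {a : A}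
    (ha : IsSelfAdjoint a) : ‖NormedSpace.exp (I • a)‖ = 1 :=
  CStarRing.norm_of_mem_unitary (selfAdjoint.expUnitary ⟨a, ha⟩).prop

section
variable {E : Type*} [NormedAddCommGroup E] [InnerProductSpace ℂ E] [CompleteSpace E]

theorem ContinuousLinearMap.isSelfAdjoint_iff_forall_im_inner_apply_self_eq_zero
    {T : E →L[ℂ] E} : IsSelfAdjoint T ↔ ∀ x, (inner ℂ (T x) x).im = 0 := by
  simp only [isSelfAdjoint_iff_isSymmetric, LinearMap.isSymmetric_iff_inner_map_self_real,
    conj_eq_iff_im, coe_coe]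

theorem ContinuousLinearMap.re_inner_apply_self_eq_zero_of_norm_exp_le_one {A : E →L[ℂ] E}
    (hA : ∀ t : ℝ, ‖exp (t • A)‖ ≤ 1) (x : E) : (inner ℂ (A x) x).re = 0 := by
  have hmax : IsLocalMax (fun t : ℝ => ‖exp (t • A) x‖) 0 :=
    Filter.Eventually.of_forall fun t => by
      simpa using (le_opNorm _ _).trans (mul_le_of_le_one_left (norm_nonneg x) (hA t))
  have hderiv : HasDerivAt (fun t : ℝ => exp (t • A) x) (A x) 0 := by
    have hexp : HasDerivAt (fun t : ℝ => exp (t • A)) A 0 := by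
      simpa using hasDerivAt_exp_smul_const (𝕂 := ℝ) A (0 : ℝ)
    exact ((apply ℂ E x).restrictScalars ℝ).hasFDerivAt.comp_hasDerivAt (0 : ℝ) hexp
  have := @IsLocalMax.real_inner_hasDerivAt_eq_zero _ _ (.rclikeToReal ℂ E) _ _ _ hmax hderiv
  rwa [real_inner_eq_re_inner, inner_re_symm, zero_smul, NormedSpace.exp_zero,
    one_apply_eq_self] at this
end

/-- On a (nontrivial) complex Hilbert space, a bounded operator `H` satisfies
`‖exp(itH)‖ = 1` for all real `t` iff `H` is self-adjoint. -/
theorem stmt2 (E : Type*) [NormedAddCommGroup E] [InnerProductSpace ℂ E]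
    [CompleteSpace E] [Nontrivial E] (H : E →L[ℂ] E) :
    (∀ t : ℝ, ‖NormedSpace.exp (((t : ℂ) * Complex.I) • H)‖ = 1) ↔
      IsSelfAdjoint H := by
  have hsmul (t : ℝ) : ((t : ℂ) * I) • H = I • (t • H) := by
    rw [mul_comm, ← smul_smul, Complex.coe_smul]
  constructor
  · intro h
    refine H.isSelfAdjoint_iff_forall_im_inner_apply_self_eq_zero.mpr fun x => ?_
    have hI : ∀ t : ℝ, ‖exp (t • I • H)‖ ≤ 1 := fun t => by
      rw [smul_comm, ← hsmul, h t]
    simpa [inner_smul_left] using (I • H).re_inner_apply_self_eq_zero_of_norm_exp_le_one hI x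
  · intro hH t
    rw [hsmul]
    exact ((IsSelfAdjoint.all t).smul hH).norm_exp_I_smul
end

section
/- In the two-dimensional real normed space whose unit ball is a regular octagon centered at the origin (with a vertex on the positive x-axis), the rotation by angle π/4 is a surjective linear isometry that is not of the form (x,y) ↦ (ε₁ x_{σ(1)}, ε₂ x_{σ(2)}) for signs ε_i and a permutation σ. -/
/-!
`rotEighth` is the rotation by `π / 4`, which shifts the eight vertices of the octagon cyclically;
a linear equivalence mapping the octagon onto itself preserves its gauge. It is not a signed
coordinate permutation: those send `e₀` to some `±eⱼ`, whose coordinates square to `0` or `1`,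
whereas the first coordinate of the rotated `e₀` is `cos (π / 4)`, with square `1 / 2`.
-/

open Real

/-- The regular octagon (unit ball) in `ℝ²`, with a vertex on the positive x-axis. -/
noncomputable def octagon : Set (Fin 2 → ℝ) :=
  convexHull ℝ {p | ∃ k : Fin 8, p = ![Real.cos (k * (π / 4)), Real.sin (k * (π / 4))]}

/-- Rotation of the plane by angle `π/4`. -/
noncomputable def rotEighth (v : Fin 2 → ℝ) : Fin 2 → ℝ :=
  ![v 0 * Real.cos (π / 4) - v 1 * Real.sin (π / 4),
    v 0 * Real.sin (π / 4) + v 1 * Real.cos (π / 4)]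

theorem gauge_image_linearEquiv {E F : Type*} [AddCommGroup E] [Module ℝ E] [AddCommGroup F]
    [Module ℝ F] (e : E ≃ₗ[ℝ] F) (s : Set E) (x : E) : gauge (e '' s) (e x) = gauge s x := by
  simp only [gauge_def', ← map_smul, e.injective.mem_set_image]

theorem Function.Periodic.range_comp_add_nat {α : Type*} {f : ℕ → α} {c : ℕ}
    (hf : Function.Periodic f c) (hc : 0 < c) (k : ℕ) :
    Set.range (fun n => f (n + k)) = Set.range f := by
  refine Set.Subset.antisymm (Set.range_comp_subset_range _ f) ?_
  rintro _ ⟨n, rfl⟩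
  have : k ≤ k * c := Nat.le_mul_of_pos_right k hc
  refine ⟨n + k * c - k, ?_⟩
  dsimp only
  rw [Nat.sub_add_cancel (by omega)]
  exact hf.nat_mul k n

theorem Function.Periodic.range_fin {α : Type*} {f : ℕ → α} {c : ℕ}
    (hf : Function.Periodic f c) (hc : 0 < c) :
    Set.range (fun k : Fin c => f k) = Set.range f := by
  refine Set.Subset.antisymm (Set.range_comp_subset_range _ f) ?_
  rintro _ ⟨n, rfl⟩
  exact ⟨⟨n % c, Nat.mod_lt n hc⟩, hf.map_mod_nat n⟩

noncomputable def planeRotation (θ : ℝ) : (Fin 2 → ℝ) ≃ₗ[ℝ] Fin 2 → ℝ where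
  toFun v := ![v 0 * cos θ - v 1 * sin θ, v 0 * sin θ + v 1 * cos θ]
  invFun v := ![v 0 * cos θ + v 1 * sin θ, -v 0 * sin θ + v 1 * cos θ]
  map_add' x y := by ext i; fin_cases i <;> simp <;> ring
  map_smul' c x := by ext i; fin_cases i <;> simp <;> ring
  left_inv v := by
    ext i; fin_cases i <;>
      simp only [Fin.zero_eta, Fin.mk_one, Matrix.cons_val_zero, Matrix.cons_val_one,
        Matrix.cons_val_fin_one]
    · linear_combination v 0 * cos_sq_add_sin_sq θ
    · linear_combination v 1 * cos_sq_add_sin_sq θ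
  right_inv v := by
    ext i; fin_cases i <;>
      simp only [Fin.zero_eta, Fin.mk_one, Matrix.cons_val_zero, Matrix.cons_val_one,
        Matrix.cons_val_fin_one]
    · linear_combination v 0 * cos_sq_add_sin_sq θ
    · linear_combination v 1 * cos_sq_add_sin_sq θ

theorem planeRotation_cos_sin (θ φ : ℝ) :
    planeRotation θ ![cos φ, sin φ] = ![cos (φ + θ), sin (φ + θ)] := by
  ext i; fin_cases i
  · simp [planeRotation, cos_add]
  · simp only [planeRotation, LinearEquiv.coe_mk, LinearMap.coe_mk, AddHom.coe_mk, Fin.mk_one,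
      Matrix.cons_val_zero, Matrix.cons_val_one, Matrix.cons_val_fin_one, sin_add]
    ring

theorem rotEighth_eq : rotEighth = planeRotation (π / 4) := rfl

noncomputable def octagonVertex (n : ℕ) : Fin 2 → ℝ :=
  ![cos (n * (π / 4)), sin (n * (π / 4))]

theorem octagonVertex_periodic : Function.Periodic octagonVertex 8 := by
  intro n
  have h : ((n + 8 : ℕ) : ℝ) * (π / 4) = n * (π / 4) + 2 * π := by push_cast; ring
  simp only [octagonVertex, h, cos_add_two_pi, sin_add_two_pi]

theorem octagon_eq_convexHull_range : octagon = convexHull ℝ (Set.range octagonVertex) := by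
  rw [octagon, ← octagonVertex_periodic.range_fin (by norm_num)]
  congr 1
  ext p
  simp [octagonVertex, eq_comm]

theorem rotEighth_octagonVertex (n : ℕ) : rotEighth (octagonVertex n) = octagonVertex (n + 1) := by
  rw [rotEighth_eq, octagonVertex, planeRotation_cos_sin, octagonVertex]
  push_cast
  ring_nf

theorem rotEighth_image_octagon : rotEighth '' octagon = octagon := by
  rw [octagon_eq_convexHull_range, rotEighth_eq, ← LinearEquiv.coe_toLinearMap,
    LinearMap.image_convexHull, ← Set.range_comp]
  have : ⇑(planeRotation (π / 4)).toLinearMap ∘ octagonVertex = fun n => octagonVertex (n + 1) :=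
    funext rotEighth_octagonVertex
  rw [this, octagonVertex_periodic.range_comp_add_nat (by norm_num)]

theorem gauge_octagon_rotEighth (v : Fin 2 → ℝ) : gauge octagon (rotEighth v) = gauge octagon v :=
  calc gauge octagon (rotEighth v) = gauge (rotEighth '' octagon) (rotEighth v) := by
        rw [rotEighth_image_octagon]
    _ = gauge octagon v := gauge_image_linearEquiv (planeRotation (π / 4)) octagon v

theorem cos_sq_pi_div_four : cos (π / 4) ^ 2 = 1 / 2 := by
  rw [cos_pi_div_four, div_pow, sq_sqrt zero_le_two]
  norm_num

/-- In the two-dimensional real normed space whose unit ball is the regular octagon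
(norm given by the gauge of the octagon), rotation by `π/4` is a surjective linear
isometry which is not a signed coordinate permutation. -/
theorem stmt6 :
    IsLinearMap ℝ rotEighth ∧ Function.Bijective rotEighth ∧
    (∀ v, gauge octagon (rotEighth v) = gauge octagon v) ∧
    ¬ ∃ (σ : Equiv.Perm (Fin 2)) (ε : Fin 2 → ℝ),
        (∀ i, ε i = 1 ∨ ε i = -1) ∧
        ∀ (v : Fin 2 → ℝ) (i : Fin 2), rotEighth v i = ε i * v (σ i) := by
  refine ⟨(planeRotation (π / 4)).toLinearMap.isLinear, (planeRotation (π / 4)).bijective,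
    gauge_octagon_rotEighth, ?_⟩
  rintro ⟨σ, ε, hε, h⟩
  have hsq : (ε 0 * ![1, 0] (σ 0)) ^ 2 = 1 / 2 := by
    rw [← h, ← cos_sq_pi_div_four]
    simp [rotEighth]
  have hε0 : ε 0 ^ 2 = 1 := by rcases hε 0 with hs | hs <;> simp [hs]
  generalize σ 0 = j at hsq
  fin_cases j <;> norm_num [mul_pow, hε0] at hsq
end

section
/- Let E = ℂ^{n+1} with an absolute norm (depending only on the moduli of coordinates), and let t_k(φ) denote the diagonal isometry multiplying the k-th coordinate by e^{iφ} and fixing the others. If T ⊆ ℂ^{n+1} is a real-linear subspace invariant under t_k(φ) for all φ ∈ ℝ, then either every vector in T has vanishing k-th coordinate, or both e_k and i·e_k belong to T. -/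
/-! Subtracting from `v ∈ T` its rotation by `π` leaves `2 v_k e_k ∈ T`. Hence the real subspace
`{z | z e_k ∈ T}` of `ℂ` is nonzero and closed under multiplication by `e^{iφ}`; together with
real scaling these maps carry any nonzero `z` to any `c`, so the subspace is all of `ℂ`. -/

open Complex

theorem Complex.mem_of_exp_mul_mem {S : Submodule ℝ ℂ}
    (hS : ∀ φ : ℝ, ∀ z ∈ S, exp (I * φ) * z ∈ S) {z : ℂ} (hz : z ∈ S) (hz0 : z ≠ 0)
    (c : ℂ) : c ∈ S := by
  have hcz : c = ‖c / z‖ • (exp (I * (c / z).arg) * z) := by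
    rw [real_smul, ← mul_assoc, mul_comm I, norm_mul_exp_arg_mul_I, div_mul_cancel₀ c hz0]
  rw [hcz]
  exact S.smul_mem _ (hS _ z hz)

section CoordinateRotation

variable {ι : Type*} [DecidableEq ι] {k : ι} {T : Submodule ℝ (ι → ℂ)}
  (hT : ∀ φ : ℝ, ∀ v ∈ T, (fun i => if i = k then exp (I * φ) * v i else v i) ∈ T)
include hT

theorem single_two_mul_mem_of_rotation_invariant {v : ι → ℂ} (hv : v ∈ T) :
    Pi.single k (2 * v k) ∈ T := by
  convert T.sub_mem hv (hT Real.pi v hv) using 1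
  ext i
  rcases eq_or_ne i k with rfl | hi
  · simp [mul_comm I, exp_pi_mul_I, two_mul]
  · simp [hi]

theorem single_exp_mul_mem_of_rotation_invariant {z : ℂ} (hz : Pi.single k z ∈ T) (φ : ℝ) :
    Pi.single k (exp (I * φ) * z) ∈ T := by
  convert hT φ _ hz using 1
  ext i
  rcases eq_or_ne i k with rfl | hi
  · simp
  · simp [hi]

theorem single_mem_of_rotation_invariant {v : ι → ℂ} (hv : v ∈ T) (hvk : v k ≠ 0) (c : ℂ) :
    Pi.single k c ∈ T :=
  Complex.mem_of_exp_mul_mem (S := T.comap (LinearMap.single ℝ (fun _ => ℂ) k))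
    (fun φ _ hz => single_exp_mul_mem_of_rotation_invariant hT hz φ)
    (single_two_mul_mem_of_rotation_invariant hT hv) (mul_ne_zero two_ne_zero hvk) c

end CoordinateRotation

/-- In `ℂ^{n+1}`, let `t_k(φ)` multiply the `k`-th coordinate by `e^{iφ}`. If a real
subspace `T` is invariant under `t_k(φ)` for all real `φ`, then either every vector of
`T` has vanishing `k`-th coordinate, or both `e_k` and `i e_k` belong to `T`. -/
theorem stmt9 (n : ℕ) (k : Fin (n + 1)) (T : Submodule ℝ (Fin (n + 1) → ℂ))
    (hT : ∀ φ : ℝ, ∀ v ∈ T,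
      (fun i => if i = k then Complex.exp (Complex.I * φ) * v i else v i) ∈ T) :
    (∀ v ∈ T, v k = 0) ∨
      ((Pi.single k (1 : ℂ) : Fin (n + 1) → ℂ) ∈ T ∧
        (Pi.single k (Complex.I) : Fin (n + 1) → ℂ) ∈ T) := by
  refine or_iff_not_imp_left.mpr fun h => ?_
  obtain ⟨v, hv, hvk⟩ := not_forall₂.mp h
  exact ⟨single_mem_of_rotation_invariant hT hv hvk 1,
    single_mem_of_rotation_invariant hT hv hvk I⟩
end
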